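/- arXiv:1512.06233 — 2 statements merged into one kernel-verified Lean document; each statement's English description precedes it below -/
import Mathlib

section
/- The tensor product of processes is injective up to weak bisimulation: if P₁ ⊗ P₂ is weakly bisimilar to Q₁ ⊗ Q₂ then P₁ is weakly bisimilar to Q₁ and P₂ is weakly bisimilar to Q₂. -/
set_option linter.unnecessarySeqFocus false

/-! # CCS with simultaneous actions (Abramsky, "Process Realizability") -/

/-- Labels: names (`inl`) and co-names (`inr`). -/
abbrev Label : Type := ℕ ⊕ ℕ

/-- The involution `λ ↦ λ̄` exchanging names and co-names. -/
def Label.bar : Label → Label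
  | .inl n => .inr n
  | .inr n => .inl n

/-- Actions: finite sets of labels, performed simultaneously.  `τ = ∅`. -/
abbrev Act : Type := Finset Label

/-- A renaming: a partial injective function on labels preserving the involution. -/
structure Renaming where
  toFun : Label → Option Label
  inj : ∀ ⦃x y z : Label⦄, toFun x = some z → toFun y = some z → x = y
  bar : ∀ x : Label, toFun (Label.bar x) = (toFun x).map Label.bar

/-- The pointwise extension of a renaming to actions. -/
def Renaming.onAction (f : Renaming) (a : Act) : Act :=
  a.filterMap f.toFun (fun _ _ _ hx hy => f.inj (Option.mem_def.mp hx) (Option.mem_def.mp hy))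

/-- Guarded process terms of CCS with simultaneous actions:
prefix, countably-indexed guarded sums (all guards non-`τ`), parallel composition,
restriction, renaming, process variables (de Bruijn) and recursion. -/
inductive Proc : Type where
  | pre (a : Act) (P : Proc)
  | sum (I : Set ℕ) (act : ℕ → Act) (cont : ℕ → Proc) (hg : ∀ n ∈ I, (act n).Nonempty)
  | par (P Q : Proc)
  | restrict (P : Proc) (L : Set Label)
  | rename (P : Proc) (f : Renaming)
  | var (n : ℕ)
  | fix (P : Proc)

/-- The inactive process `0` (the empty sum). -/
def Proc.nil : Proc := .sum ∅ (fun _ => ∅) (fun _ => .var 0) (by simp)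

/-- Substitution of a process for the variable with de Bruijn index `d`. -/
def Proc.subst (R : Proc) : ℕ → Proc → Proc
  | d, .pre a P => .pre a (Proc.subst R d P)
  | d, .sum I act cont hg => .sum I act (fun n => Proc.subst R d (cont n)) hg
  | d, .par P Q => .par (Proc.subst R d P) (Proc.subst R d Q)
  | d, .restrict P L => .restrict (Proc.subst R d P) L
  | d, .rename P f => .rename (Proc.subst R d P) f
  | d, .var n => if n = d then R else .var n
  | d, .fix P => .fix (Proc.subst R (d + 1) P)

/-- The labelled transition relation, with the generalized synchronization rule
for simultaneous (compound) actions. -/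
inductive Step : Proc → Act → Proc → Prop where
  | pre {a P} : Step (.pre a P) a P
  | sum {I act cont hg} (j : ℕ) (hj : j ∈ I) : Step (.sum I act cont hg) (act j) (cont j)
  | restrict {P a Q L} : Step P a Q → (∀ l ∈ a, l ∉ L ∧ Label.bar l ∉ L) →
      Step (.restrict P L) a (.restrict Q L)
  | rename {P a Q} {f : Renaming} : Step P a Q → (∀ l ∈ a, (f.toFun l).isSome) →
      Step (.rename P f) (f.onAction a) (.rename Q f)
  | fix {P a Q} : Step (Proc.subst (.fix P) 0 P) a Q → Step (.fix P) a Q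
  | parL {P a P' Q} : Step P a P' → Step (.par P Q) a (.par P' Q)
  | parR {P Q a Q'} : Step Q a Q' → Step (.par P Q) a (.par P Q')
  | sync {P Q P' Q' a b c} : Step P (a ∪ b) P' → Step Q (b.image Label.bar ∪ c) Q' →
      Disjoint a b → Disjoint (b.image Label.bar) c → Disjoint a c →
      Step (.par P Q) (a ∪ c) (.par P' Q')

/-- Zero or more silent (`τ`) transitions. -/
def TauStar : Proc → Proc → Prop :=
  Relation.ReflTransGen (fun P Q => Step P ∅ Q)

/-- Observable transition `P ⟹a Q`: `τ* a τ*`. -/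
def Obs (P : Proc) (a : Act) (Q : Proc) : Prop :=
  ∃ P₁ P₂, TauStar P P₁ ∧ Step P₁ a P₂ ∧ TauStar P₂ Q

/-- Observable transitions along a string of (non-`τ`) actions. -/
inductive ObsSeq : Proc → List Act → Proc → Prop where
  | nil {P Q} : TauStar P Q → ObsSeq P [] Q
  | cons {P a Q s R} : Obs P a Q → ObsSeq Q s R → ObsSeq P (a :: s) R

/-- The failures of a process: pairs `(s, X)` with `s` a string of nonempty actions and
`X` a set of nonempty actions such that `P ⟹s Q` for some `Q` refusing every action of `X`. -/
def failures (P : Proc) : Set (List Act × Set Act) :=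
  { sX | (∀ a ∈ sX.1, a.Nonempty) ∧ (∀ a ∈ sX.2, a.Nonempty) ∧
      ∃ Q, ObsSeq P sX.1 Q ∧ ∀ a ∈ sX.2, ¬∃ R, Obs Q a R }

/-- Failures equivalence. -/
def FailEq (P Q : Proc) : Prop := failures P = failures Q

/-- Weak simulations (with respect to the observable transitions). -/
def IsWeakSim (R : Proc → Proc → Prop) : Prop :=
  ∀ ⦃P Q⦄, R P Q →
    (∀ P', TauStar P P' → ∃ Q', TauStar Q Q' ∧ R P' Q') ∧
    (∀ a P', (a : Act).Nonempty → Obs P a P' → ∃ Q', Obs Q a Q' ∧ R P' Q')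

/-- Weak bisimilarity. -/
def WeakBisim (P Q : Proc) : Prop :=
  ∃ R : Proc → Proc → Prop, IsWeakSim R ∧ IsWeakSim (fun x y => R y x) ∧ R P Q
/-! ## The split name space and the basic combinators -/

/-- Build a bar-preserving partial injective renaming from a partial injective map on names. -/
def Renaming.ofNameFun (f : ℕ → Option ℕ)
    (hf : ∀ ⦃x y z : ℕ⦄, f x = some z → f y = some z → x = y) : Renaming where
  toFun := fun l =>
    match l with
    | .inl n => (f n).map .inl
    | .inr n => (f n).map .inr
  inj := by
    rintro (x | x) (y | y) (z | z) hx hy <;>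
      simp only [Option.map_eq_some_iff] at hx hy <;>
      obtain ⟨a, ha, ha'⟩ := hx <;> obtain ⟨b, hb, hb'⟩ := hy <;>
        solve
          | (cases ha'; cases hb'; exact congrArg _ (hf ha hb))
          | (cases hb')
          | (cases ha')
  bar := by
    rintro (n | n) <;> cases hf : f n <;> simp [Label.bar, hf]

/-- The underlying name of a label. -/
def Label.name : Label → ℕ := Sum.elim id id

/-- The injection `l` of the name space onto its "left" half (even names). -/
def lRen : Renaming := Renaming.ofNameFun (fun n => some (2 * n)) (by intro x y z hx hy; simp only [Option.some.injEq] at hx hy; omega)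

/-- The injection `r` of the name space onto its "right" half (odd names). -/
def rRen : Renaming := Renaming.ofNameFun (fun n => some (2 * n + 1)) (by intro x y z hx hy; simp only [Option.some.injEq] at hx hy; omega)

/-- The partial inverse `l⁻¹` of `l`. -/
def lInv : Renaming :=
  Renaming.ofNameFun (fun n => if n % 2 = 0 then some (n / 2) else none)
    (by intro x y z hx hy; try dsimp only at hx hy
        split at hx <;> split at hy <;> simp_all <;> omega)

/-- The partial inverse `r⁻¹` of `r`. -/
def rInv : Renaming :=
  Renaming.ofNameFun (fun n => if n % 2 = 1 then some (n / 2) else none)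
    (by intro x y z hx hy; try dsimp only at hx hy
        split at hx <;> split at hy <;> simp_all <;> omega)

/-- The left half `ℒ_l` of the label space. -/
def LabL : Set Label := {x | x.name % 2 = 0}

/-- The right half `ℒ_r` of the label space. -/
def LabR : Set Label := {x | x.name % 2 = 1}

/-- Tensor product: disjoint (non-communicating) parallel composition `P[l] | Q[r]`. -/
def tensor (P Q : Proc) : Proc := .par (P.rename lRen) (Q.rename rRen)

/-- Left (forwards) application `⟨Q | P⟩ = ((Q[l] | P) ∖ ℒ_l)[r⁻¹]`. -/
def lapp (Q P : Proc) : Proc := ((Proc.par (Q.rename lRen) P).restrict LabL).rename rInv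

/-- Right (reverse) application `(P | R⟩ = ((P | R[r]) ∖ ℒ_r)[l⁻¹]`. -/
def rapp (P R : Proc) : Proc := ((Proc.par P (R.rename rRen)).restrict LabR).rename lInv

/-! ### The three-fold decomposition `𝒩 = 𝒩₁ ∪̇ 𝒩₂ ∪̇ 𝒩₃` and composition -/

/-- `φ₁₂ : 𝒩 ≅ 𝒩₁ ∪̇ 𝒩₂` (`𝒩ᵢ` = names `≡ i - 1 (mod 3)`), carrying `𝒩_l` onto `𝒩₁`, `𝒩_r` onto `𝒩₂`. -/
def phi12 : Renaming :=
  Renaming.ofNameFun (fun n => some (if n % 2 = 0 then 3 * (n / 2) else 3 * (n / 2) + 1))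
    (by intro x y z hx hy; try dsimp only at hx hy
        simp only [Option.some.injEq] at hx hy
        split at hx <;> split at hy <;> omega)

/-- `φ₂₃ : 𝒩 ≅ 𝒩₂ ∪̇ 𝒩₃`, carrying `𝒩_l` onto `𝒩₂`, `𝒩_r` onto `𝒩₃`. -/
def phi23 : Renaming :=
  Renaming.ofNameFun (fun n => some (if n % 2 = 0 then 3 * (n / 2) + 1 else 3 * (n / 2) + 2))
    (by intro x y z hx hy; try dsimp only at hx hy
        simp only [Option.some.injEq] at hx hy
        split at hx <;> split at hy <;> omega)

/-- The partial inverse `φ₁₃⁻¹` of `φ₁₃ : 𝒩 ≅ 𝒩₁ ∪̇ 𝒩₃`. -/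
def phi13Inv : Renaming :=
  Renaming.ofNameFun
    (fun n => if n % 3 = 0 then some (2 * (n / 3)) else if n % 3 = 2 then some (2 * (n / 3) + 1) else none)
    (by intro x y z hx hy; try dsimp only at hx hy
        split at hx <;> split at hy <;> simp_all <;> omega)

/-- The middle part `𝒩₂` of the label space (as a set of labels). -/
def Lab2 : Set Label := {x | x.name % 3 = 1}

/-- Composition `P ; Q = ((P[φ₁₂] | Q[φ₂₃]) ∖ 𝒩₂)[φ₁₃⁻¹]`. -/
def comp (P Q : Proc) : Proc :=
  ((Proc.par (P.rename phi12) (Q.rename phi23)).restrict Lab2).rename phi13Inv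

/-! ### The identity (wire) process -/

/-- The identity process `I = rec X. Σ_{a ∈ Act₊} (l(a) ∪ r(a)‾).X`. -/
noncomputable def Iproc : Proc :=
  .fix (.sum {n | ∃ a : Act, (Encodable.decode n : Option Act) = some a ∧ a.Nonempty}
    (fun n =>
      match (Encodable.decode n : Option Act) with
      | some a => lRen.onAction a ∪ (rRen.onAction a).image Label.bar
      | none => {Sum.inl 0})
    (fun _ => .var 0)
    (by rintro n ⟨a, ha, hne⟩
        simp only [ha]
        obtain ⟨x, hx⟩ := hne
        refine Finset.Nonempty.mono Finset.subset_union_left ⟨(Sum.map (2 * ·) (2 * ·)) x, ?_⟩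
        simp only [Renaming.onAction, Finset.mem_filterMap]
        exact ⟨x, hx, by cases x <;> rfl⟩))

/-! ## Guarded choice combinators, the additive pairing and injections, `!P`, divergence -/

/-- Binary guarded sum `a.P + b.Q` (guards must be non-`τ`). -/
def gsum2 (a : Act) (P : Proc) (b : Act) (Q : Proc) (ha : a.Nonempty) (hb : b.Nonempty) : Proc :=
  .sum {0, 1} (fun n => if n = 0 then a else b) (fun n => if n = 0 then P else Q)
    (by intro n _; (try dsimp only); split <;> assumption)

/-- Ternary guarded sum `a.P + b.Q + c.R`. -/
def gsum3 (a : Act) (P : Proc) (b : Act) (Q : Proc) (c : Act) (R : Proc)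
    (ha : a.Nonempty) (hb : b.Nonempty) (hc : c.Nonempty) : Proc :=
  .sum {0, 1, 2} (fun n => if n = 0 then a else if n = 1 then b else c)
    (fun n => if n = 0 then P else if n = 1 then Q else R)
    (by intro n _; (try dsimp only); split <;> [skip; split] <;> assumption)

/-- The distinguished names: `α = 0`, `β = 1`, `ω = 2`, `δ = 3`, `γ = 4`, `σ = 5`. -/
def αAct : Act := {Sum.inl 0}
def βAct : Act := {Sum.inl 1}
def αBar : Act := {Sum.inr 0}
def βBar : Act := {Sum.inr 1}
def ωAct : Act := {Sum.inl 2}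
def δBar : Act := {Sum.inr 3}
def γBar : Act := {Sum.inr 4}

/-- The additive pairing `⟨P, Q⟩ = r(α).P + r(β).Q`  (`r(α) = 1`, `r(β) = 3`). -/
def pairR (P Q : Proc) : Proc :=
  gsum2 {Sum.inl 1} P {Sum.inl 3} Q (Finset.singleton_nonempty _) (Finset.singleton_nonempty _)

/-- The plain additive pairing `α.P + β.Q` used in the realizability clauses for `&`. -/
def pairProc (P Q : Proc) : Proc :=
  gsum2 αAct P βAct Q (Finset.singleton_nonempty _) (Finset.singleton_nonempty _)

/-- The left injection `l(P) = l(α)‾.P`  (`l(α) = 0`). -/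
def injl (P : Proc) : Proc := .pre {Sum.inr 0} P

/-- The right injection `r(Q) = r(β)‾.Q`  (`r(β) = 3`). -/
def injr (Q : Proc) : Proc := .pre {Sum.inr 3} Q

/-- The exponential combinator `!P = rec X.(ω.0 + δ.P + γ.(X[l] | X[r]))`. -/
def bangProc (P : Proc) : Proc :=
  .fix (gsum3 ωAct Proc.nil ({Sum.inl 3} : Act) P ({Sum.inl 4} : Act)
    (.par (Proc.rename (.var 0) lRen) (Proc.rename (.var 0) rRen))
    (Finset.singleton_nonempty _) (Finset.singleton_nonempty _) (Finset.singleton_nonempty _))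

/-- `P` diverges if there is an infinite sequence of `τ`-transitions from `P`. -/
def Diverges (P : Proc) : Prop :=
  ∃ f : ℕ → Proc, f 0 = P ∧ ∀ n, Step (f n) ∅ (f (n + 1))

/-- `P ⊥ Q`: closing the system, `P` and `Q` interacting with each other yield no divergence. -/
def Orth (P Q : Proc) : Prop := ¬ Diverges ((Proc.par P Q).restrict Set.univ)

/-!
Every transition of `P ⊗ Q` is a pair of moves of `P` and `Q`, each either a transition or
idling, with action `l(a) ∪ r(b)`: the ranges of `l` and `r` are disjoint and closed under bar,
so no synchronization between the two halves can occur, and `(a, b)` is recovered from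
`l(a) ∪ r(b)`. Hence weak moves `⟹â` of `P ⊗ Q` are exactly pairs of weak moves of `P` and `Q`,
so relating `P` to `Q` whenever `P ⊗ U ≈ Q ⊗ V` for some `U`, `V` is a symmetric weak
simulation (likewise for the right factor).
-/

def StepOrIdle (P : Proc) (a : Act) (P' : Proc) : Prop := Step P a P' ∨ (a = ∅ ∧ P' = P)

/-- `P ⟹â P'`: `τ*` when `a = τ`, and `P ⟹a P'` otherwise. -/
def WeakStep (P : Proc) (a : Act) (P' : Proc) : Prop :=
  ∃ P₁ P₂, TauStar P P₁ ∧ StepOrIdle P₁ a P₂ ∧ TauStar P₂ P'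

section WeakStep

variable {P P' Q : Proc} {a : Act}

lemma StepOrIdle.step (h : StepOrIdle P a P') (ha : a.Nonempty) : Step P a P' :=
  h.resolve_right fun ⟨ha₀, _⟩ => ha.ne_empty ha₀

lemma StepOrIdle.tauStar (h : StepOrIdle P ∅ P') : TauStar P P' := by
  rcases h with h | ⟨-, rfl⟩
  exacts [Relation.ReflTransGen.single h, Relation.ReflTransGen.refl]

lemma WeakStep.refl : WeakStep P ∅ P :=
  ⟨P, P, .refl, Or.inr ⟨rfl, rfl⟩, .refl⟩

lemma weakStep_empty_iff : WeakStep P ∅ P' ↔ TauStar P P' := by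
  constructor
  · rintro ⟨P₁, P₂, h₁, h₂, h₃⟩
    exact h₁.trans (h₂.tauStar.trans h₃)
  · intro h
    exact ⟨P', P', h, Or.inr ⟨rfl, rfl⟩, .refl⟩

lemma weakStep_iff_obs (ha : a.Nonempty) : WeakStep P a P' ↔ Obs P a P' := by
  constructor
  · rintro ⟨P₁, P₂, h₁, h₂, h₃⟩
    exact ⟨P₁, P₂, h₁, h₂.step ha, h₃⟩
  · rintro ⟨P₁, P₂, h₁, h₂, h₃⟩
    exact ⟨P₁, P₂, h₁, Or.inl h₂, h₃⟩

end WeakStep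

lemma isWeakSim_iff {R : Proc → Proc → Prop} :
    IsWeakSim R ↔ ∀ ⦃P Q⦄, R P Q → ∀ a P', WeakStep P a P' → ∃ Q', WeakStep Q a Q' ∧ R P' Q' := by
  constructor
  · intro hR P Q hPQ a P' hP
    rcases a.eq_empty_or_nonempty with rfl | ha
    · simpa only [weakStep_empty_iff] using (hR hPQ).1 P' (weakStep_empty_iff.1 hP)
    · simpa only [weakStep_iff_obs ha] using (hR hPQ).2 a P' ha ((weakStep_iff_obs ha).1 hP)
  · intro hR P Q hPQ
    refine ⟨fun P' hP => ?_, fun a P' ha hP => ?_⟩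
    · simpa only [weakStep_empty_iff] using hR hPQ ∅ P' (weakStep_empty_iff.2 hP)
    · simpa only [weakStep_iff_obs ha] using hR hPQ a P' ((weakStep_iff_obs ha).2 hP)

lemma weakBisim_of_symmetric {S : Proc → Proc → Prop}
    (hS : ∀ ⦃P Q⦄, S P Q → ∀ a P', WeakStep P a P' → ∃ Q', WeakStep Q a Q' ∧ S P' Q')
    (hsymm : ∀ ⦃P Q⦄, S P Q → S Q P) {P Q : Proc} (h : S P Q) : WeakBisim P Q := by
  refine ⟨S, isWeakSim_iff.2 hS, isWeakSim_iff.2 fun P Q hPQ a P' hP => ?_, h⟩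
  obtain ⟨Q', hQ, hS'⟩ := hS (hsymm hPQ) a P' hP
  exact ⟨Q', hQ, hsymm hS'⟩

lemma WeakBisim.symm {P Q : Proc} (h : WeakBisim P Q) : WeakBisim Q P := by
  obtain ⟨R, hR, hR', hPQ⟩ := h
  exact ⟨fun x y => R y x, hR', hR, hPQ⟩

lemma WeakBisim.exists_weakStep {P Q P' : Proc} {a : Act} (h : WeakBisim P Q)
    (hP : WeakStep P a P') : ∃ Q', WeakStep Q a Q' ∧ WeakBisim P' Q' := by
  obtain ⟨R, hR, hR', hPQ⟩ := h
  obtain ⟨Q', hQ, hPQ'⟩ := isWeakSim_iff.1 hR hPQ a P' hP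
  exact ⟨Q', hQ, R, hR, hR', hPQ'⟩

def lmap : Label → Label := Sum.map (2 * ·) (2 * ·)

def rmap : Label → Label := Sum.map (2 * · + 1) (2 * · + 1)

def tensorAct (a b : Act) : Act := a.image lmap ∪ b.image rmap

lemma lRen_toFun (x : Label) : lRen.toFun x = some (lmap x) := by
  cases x <;> rfl

lemma rRen_toFun (x : Label) : rRen.toFun x = some (rmap x) := by
  cases x <;> rfl

lemma lRen_onAction (a : Act) : lRen.onAction a = a.image lmap := by
  ext
  simp only [Renaming.onAction, Finset.mem_filterMap, Finset.mem_image, lRen_toFun,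
    Option.some.injEq]

lemma rRen_onAction (a : Act) : rRen.onAction a = a.image rmap := by
  ext
  simp only [Renaming.onAction, Finset.mem_filterMap, Finset.mem_image, rRen_toFun,
    Option.some.injEq]

lemma lmap_injective : Function.Injective lmap :=
  Sum.map_injective.2 ⟨fun _ _ h => by dsimp only at h; omega, fun _ _ h => by dsimp only at h; omega⟩

lemma rmap_injective : Function.Injective rmap :=
  Sum.map_injective.2 ⟨fun _ _ h => by dsimp only at h; omega, fun _ _ h => by dsimp only at h; omega⟩

lemma lmap_ne_rmap (x y : Label) : lmap x ≠ rmap y := by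
  cases x <;> cases y <;> simp only [lmap, rmap, Sum.map_inl, Sum.map_inr, ne_eq,
    Sum.inl.injEq, Sum.inr.injEq, reduceCtorEq, not_false_eq_true] <;> omega

lemma bar_lmap_ne_rmap (x y : Label) : Label.bar (lmap x) ≠ rmap y := by
  cases x <;> cases y <;> simp only [lmap, rmap, Label.bar, Sum.map_inl, Sum.map_inr, ne_eq,
    Sum.inl.injEq, Sum.inr.injEq, reduceCtorEq, not_false_eq_true] <;> omega

@[simp]
lemma lmap_mem_tensorAct {x : Label} {a b : Act} : lmap x ∈ tensorAct a b ↔ x ∈ a := by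
  simp [tensorAct, lmap_injective.eq_iff, (lmap_ne_rmap _ _).symm]

@[simp]
lemma rmap_mem_tensorAct {y : Label} {a b : Act} : rmap y ∈ tensorAct a b ↔ y ∈ b := by
  simp [tensorAct, rmap_injective.eq_iff, lmap_ne_rmap]

lemma tensorAct_inj {a b a' b' : Act} : tensorAct a b = tensorAct a' b' ↔ a = a' ∧ b = b' := by
  refine ⟨fun h => ⟨?_, ?_⟩, fun ⟨rfl, rfl⟩ => rfl⟩ <;> ext x
  · rw [← lmap_mem_tensorAct (b := b), h, lmap_mem_tensorAct]
  · rw [← rmap_mem_tensorAct (a := a), h, rmap_mem_tensorAct]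

@[simp]
lemma tensorAct_empty : tensorAct ∅ ∅ = ∅ := rfl

section Tensor

variable {P P' Q Q' T : Proc} {a b e : Act}

lemma Step.rename_inv {f : Renaming} (h : Step (P.rename f) e T) :
    ∃ a P', Step P a P' ∧ e = f.onAction a ∧ T = P'.rename f := by
  cases h with
  | rename h _ => exact ⟨_, _, h, rfl, rfl⟩

lemma stepOrIdle_tensor (hP : StepOrIdle P a P') (hQ : StepOrIdle Q b Q') :
    StepOrIdle (tensor P Q) (tensorAct a b) (tensor P' Q') := by
  have hl : ∀ {a P'}, Step P a P' → Step (P.rename lRen) (a.image lmap) (P'.rename lRen) :=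
    fun h => lRen_onAction _ ▸ h.rename fun l _ => by simp only [lRen_toFun, Option.isSome_some]
  have hr : ∀ {b Q'}, Step Q b Q' → Step (Q.rename rRen) (b.image rmap) (Q'.rename rRen) :=
    fun h => rRen_onAction _ ▸ h.rename fun l _ => by simp only [rRen_toFun, Option.isSome_some]
  rcases hP with hP | ⟨rfl, rfl⟩ <;> rcases hQ with hQ | ⟨rfl, rfl⟩
  · -- a synchronization on no labels at all
    refine Or.inl (Step.sync (b := ∅) ?_ ?_ (Finset.disjoint_empty_right _)
      (Finset.disjoint_empty_left _) ?_)
    · simpa only [Finset.union_empty] using hl hP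
    · simpa only [Finset.image_empty, Finset.empty_union] using hr hQ
    · simp only [Finset.disjoint_left, Finset.mem_image]
      rintro _ ⟨x, -, rfl⟩ ⟨y, -, hy⟩
      exact lmap_ne_rmap x y hy.symm
  · refine Or.inl ?_
    simpa only [tensor, tensorAct, Finset.image_empty, Finset.union_empty] using (hl hP).parL
  · refine Or.inl ?_
    simpa only [tensor, tensorAct, Finset.image_empty, Finset.empty_union] using (hr hQ).parR
  · exact Or.inr ⟨rfl, rfl⟩

lemma stepOrIdle_tensor_inv (h : StepOrIdle (tensor P Q) e T) :
    ∃ a b P' Q', StepOrIdle P a P' ∧ StepOrIdle Q b Q' ∧ e = tensorAct a b ∧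
      T = tensor P' Q' := by
  have idle : ∀ {R : Proc}, StepOrIdle R ∅ R := Or.inr ⟨rfl, rfl⟩
  rcases h with h | ⟨rfl, rfl⟩
  · cases h with
    | parL h =>
      obtain ⟨a, P', hP, rfl, rfl⟩ := h.rename_inv
      exact ⟨a, ∅, P', Q, .inl hP, idle, by simp [tensorAct, lRen_onAction], rfl⟩
    | parR h =>
      obtain ⟨b, Q', hQ, rfl, rfl⟩ := h.rename_inv
      exact ⟨∅, b, P, Q', idle, .inl hQ, by simp [tensorAct, rRen_onAction], rfl⟩
    | @sync _ _ _ _ a c d hl hr _ _ _ =>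
      obtain ⟨a₀, P', hP, ha, rfl⟩ := hl.rename_inv
      obtain ⟨b₀, Q', hQ, hb, rfl⟩ := hr.rename_inv
      rw [lRen_onAction] at ha
      rw [rRen_onAction] at hb
      -- a label synchronized on would be in the range of `l` and its bar in the range of `r`
      have hc : c = ∅ := by
        refine Finset.eq_empty_of_forall_notMem fun x hx => ?_
        obtain ⟨x₀, -, hx₀⟩ := Finset.mem_image.1 (ha ▸ Finset.mem_union_right a hx)
        obtain ⟨y₀, -, hy₀⟩ := Finset.mem_image.1
          (hb ▸ Finset.mem_union_left d (Finset.mem_image_of_mem Label.bar hx))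
        exact bar_lmap_ne_rmap x₀ y₀ (hx₀ ▸ hy₀.symm)
      subst hc
      rw [Finset.union_empty] at ha
      rw [Finset.image_empty, Finset.empty_union] at hb
      exact ⟨a₀, b₀, P', Q', .inl hP, .inl hQ, by rw [ha, hb, tensorAct], rfl⟩
  · exact ⟨∅, ∅, P, Q, idle, idle, rfl, rfl⟩

lemma tauStar_tensor (hP : TauStar P P') (hQ : TauStar Q Q') :
    TauStar (tensor P Q) (tensor P' Q') := by
  have hl : TauStar (tensor P Q) (tensor P' Q) :=
    hP.lift' (tensor · Q) fun _ _ h => (stepOrIdle_tensor (.inl h) (.inr ⟨rfl, rfl⟩)).tauStar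
  have hr : TauStar (tensor P' Q) (tensor P' Q') :=
    hQ.lift' (tensor P' ·) fun _ _ h => (stepOrIdle_tensor (.inr ⟨rfl, rfl⟩) (.inl h)).tauStar
  exact hl.trans hr

lemma tauStar_tensor_inv (h : TauStar (tensor P Q) T) :
    ∃ P' Q', TauStar P P' ∧ TauStar Q Q' ∧ T = tensor P' Q' := by
  induction h with
  | refl => exact ⟨P, Q, .refl, .refl, rfl⟩
  | tail _ h ih =>
    obtain ⟨P', Q', hP, hQ, rfl⟩ := ih
    obtain ⟨a, b, P'', Q'', hP', hQ', hab, rfl⟩ := stepOrIdle_tensor_inv (.inl h)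
    obtain ⟨rfl, rfl⟩ := tensorAct_inj.1 (hab.symm.trans tensorAct_empty.symm)
    exact ⟨P'', Q'', hP.trans hP'.tauStar, hQ.trans hQ'.tauStar, rfl⟩

lemma weakStep_tensor (hP : WeakStep P a P') (hQ : WeakStep Q b Q') :
    WeakStep (tensor P Q) (tensorAct a b) (tensor P' Q') := by
  obtain ⟨P₁, P₂, hP₁, hP₂, hP₃⟩ := hP
  obtain ⟨Q₁, Q₂, hQ₁, hQ₂, hQ₃⟩ := hQ
  exact ⟨tensor P₁ Q₁, tensor P₂ Q₂, tauStar_tensor hP₁ hQ₁, stepOrIdle_tensor hP₂ hQ₂,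
    tauStar_tensor hP₃ hQ₃⟩

lemma weakStep_tensor_inv (h : WeakStep (tensor P Q) e T) :
    ∃ a b P' Q', WeakStep P a P' ∧ WeakStep Q b Q' ∧ e = tensorAct a b ∧ T = tensor P' Q' := by
  obtain ⟨T₁, T₂, h₁, h₂, h₃⟩ := h
  obtain ⟨P₁, Q₁, hP₁, hQ₁, rfl⟩ := tauStar_tensor_inv h₁
  obtain ⟨a, b, P₂, Q₂, hP₂, hQ₂, rfl, rfl⟩ := stepOrIdle_tensor_inv h₂
  obtain ⟨P', Q', hP₃, hQ₃, rfl⟩ := tauStar_tensor_inv h₃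
  exact ⟨a, b, P', Q', ⟨P₁, P₂, hP₁, hP₂, hP₃⟩, ⟨Q₁, Q₂, hQ₁, hQ₂, hQ₃⟩, rfl, rfl⟩

end Tensor

lemma WeakBisim.exists_weakStep_tensor {P₁ P₂ Q₁ Q₂ P₁' P₂' : Proc} {a₁ a₂ : Act}
    (h : WeakBisim (tensor P₁ P₂) (tensor Q₁ Q₂)) (h₁ : WeakStep P₁ a₁ P₁')
    (h₂ : WeakStep P₂ a₂ P₂') :
    ∃ Q₁' Q₂', WeakStep Q₁ a₁ Q₁' ∧ WeakStep Q₂ a₂ Q₂' ∧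
      WeakBisim (tensor P₁' P₂') (tensor Q₁' Q₂') := by
  obtain ⟨T, hT, hbisim⟩ := h.exists_weakStep (weakStep_tensor h₁ h₂)
  obtain ⟨b₁, b₂, Q₁', Q₂', hQ₁, hQ₂, hb, rfl⟩ := weakStep_tensor_inv hT
  obtain ⟨rfl, rfl⟩ := tensorAct_inj.1 hb
  exact ⟨Q₁', Q₂', hQ₁, hQ₂, hbisim⟩

/-- **The tensor product of processes is injective up to weak bisimulation.** -/
theorem tensor_injective_weakBisim (P₁ P₂ Q₁ Q₂ : Proc)
    (h : WeakBisim (tensor P₁ P₂) (tensor Q₁ Q₂)) :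
    WeakBisim P₁ Q₁ ∧ WeakBisim P₂ Q₂ := by
  constructor
  · refine weakBisim_of_symmetric (S := fun x y => ∃ u v, WeakBisim (tensor x u) (tensor y v))
      ?_ (fun _ _ ⟨u, v, h⟩ => ⟨v, u, h.symm⟩) ⟨P₂, Q₂, h⟩
    rintro x y ⟨u, v, hxy⟩ a x' hx
    obtain ⟨y', v', hy, -, h'⟩ := hxy.exists_weakStep_tensor hx WeakStep.refl
    exact ⟨y', hy, u, v', h'⟩
  · refine weakBisim_of_symmetric (S := fun x y => ∃ u v, WeakBisim (tensor u x) (tensor v y))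
      ?_ (fun _ _ ⟨u, v, h⟩ => ⟨v, u, h.symm⟩) ⟨P₁, Q₁, h⟩
    rintro x y ⟨u, v, hxy⟩ a x' hx
    obtain ⟨v', y', -, hy, h'⟩ := hxy.exists_weakStep_tensor WeakStep.refl hx
    exact ⟨y', hy, u, v', h'⟩
end

section
/- The identity process I ≝ rec X. Σ_{a ∈ Act₊} (l(a) ∪ r(a)‾).X is a two-sided unit for both applications up to failures equivalence: for every process P, ⟨P | I⟩ ≈_f P and (I | P⟩ ≈_f P. -/
set_option linter.unnecessarySeqFocus false

/-!
A transition of `⟨P | I⟩` is a transition of `P[l] | I` whose action lies in `ℒ_r`. The wire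
alone always shows a nonempty `ℒ_l`-part, so such a transition is either a silent move of `P`, or a
synchronization in which `P[l]` hands its whole action `l(a)` to the wire, which re-emits it as
`r(a)`; after `r⁻¹` this is exactly a transition `P --a--> P'`, and the wire is unchanged. Hence
`P ↦ ⟨P | I⟩` commutes with the transition relation, and so preserves weak transitions, refusals
and failures. `(I | P⟩` is the mirror image, with `l` and `r` exchanged.
-/

theorem Disjoint.eq_and_eq_of_sup_eq_sup {α : Type*} [DistribLattice α] [OrderBot α]
    {u v u' v' : α} (h : u ⊔ v = u' ⊔ v') (hu : Disjoint u v') (hv : Disjoint u' v) :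
    u = u' ∧ v = v' :=
  ⟨le_antisymm (hu.left_le_of_le_sup_right (h ▸ le_sup_left))
      (hv.left_le_of_le_sup_right (h ▸ le_sup_left)),
    le_antisymm (hv.symm.left_le_of_le_sup_left (h ▸ le_sup_right))
      (hu.symm.left_le_of_le_sup_left (h ▸ le_sup_right))⟩

theorem Finset.eq_empty_of_coe_subset_of_disjoint {α : Type*} {s : Finset α} {A B : Set α}
    (hAB : Disjoint A B) (hA : ↑s ⊆ A) (hB : ↑s ⊆ B) : s = ∅ :=
  Finset.coe_eq_empty.mp (disjoint_self.mp (hAB.mono hA hB))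

namespace Label

theorem bar_involutive : Function.Involutive Label.bar := by
  rintro (n | n) <;> rfl

@[simp]
theorem image_bar_image_bar (a : Act) : (a.image Label.bar).image Label.bar = a := by
  rw [Finset.image_image, bar_involutive.comp_self, Finset.image_id]

end Label

namespace Renaming

variable (f g : Renaming)

def range : Set Label := {y | ∃ x, f.toFun x = some y}

def IsTotal : Prop := ∀ x, (f.toFun x).isSome

def IsInverse : Prop := ∀ x y, f.toFun x = some y ↔ g.toFun y = some x

variable {f g} {a : Act} {x y : Label}

theorem mem_onAction : y ∈ f.onAction a ↔ ∃ x ∈ a, f.toFun x = some y := by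
  simp [Renaming.onAction]

theorem mem_onAction_of_toFun_eq (h : f.toFun x = some y) : y ∈ f.onAction a ↔ x ∈ a :=
  mem_onAction.trans ⟨fun ⟨_, hx', h'⟩ => f.inj h' h ▸ hx', fun hx => ⟨x, hx, h⟩⟩

@[simp]
theorem onAction_empty : f.onAction ∅ = ∅ := rfl

theorem onAction_image_bar : f.onAction (a.image Label.bar) = (f.onAction a).image Label.bar := by
  ext y
  simp only [mem_onAction, Finset.mem_image]
  constructor
  · rintro ⟨_, ⟨x, hx, rfl⟩, hy⟩
    rw [f.bar, Option.map_eq_some_iff] at hy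
    obtain ⟨z, hz, rfl⟩ := hy
    exact ⟨z, ⟨x, hx, hz⟩, rfl⟩
  · rintro ⟨z, ⟨x, hx, hz⟩, rfl⟩
    exact ⟨x.bar, ⟨x, hx, rfl⟩, by rw [f.bar, hz]; rfl⟩

theorem coe_onAction_subset_range : ↑(f.onAction a) ⊆ f.range := fun _ hy =>
  let ⟨x, _, hx⟩ := mem_onAction.mp hy
  ⟨x, hx⟩

theorem bar_mem_range (hy : y ∈ f.range) : y.bar ∈ f.range :=
  let ⟨x, hx⟩ := hy
  ⟨x.bar, by rw [f.bar, hx]; rfl⟩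

theorem disjoint_onAction (hfg : Disjoint f.range g.range) {b : Act} :
    Disjoint (f.onAction a) (g.onAction b) :=
  Finset.disjoint_coe.mp
    (hfg.mono coe_onAction_subset_range coe_onAction_subset_range)

theorem IsTotal.onAction_injective (hf : f.IsTotal) : Function.Injective f.onAction := by
  intro a b h
  ext x
  obtain ⟨y, hy⟩ := Option.isSome_iff_exists.mp (hf x)
  rw [← mem_onAction_of_toFun_eq hy, h, mem_onAction_of_toFun_eq hy]

theorem IsTotal.onAction_eq_empty_iff (hf : f.IsTotal) : f.onAction a = ∅ ↔ a = ∅ :=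
  hf.onAction_injective.eq_iff' onAction_empty

theorem IsInverse.symm (h : f.IsInverse g) : g.IsInverse f := fun x y => (h y x).symm

theorem IsInverse.isSome_iff (h : f.IsInverse g) : (g.toFun y).isSome ↔ y ∈ f.range := by
  rw [Option.isSome_iff_exists]
  exact exists_congr fun x => (h x y).symm

theorem IsInverse.onAction_onAction (h : f.IsInverse g) (ha : ∀ x ∈ a, (f.toFun x).isSome) :
    g.onAction (f.onAction a) = a := by
  ext x
  simp only [mem_onAction]
  constructor
  · rintro ⟨y, ⟨z, hz, hzy⟩, hyx⟩
    exact Option.some_injective _ (((h z y).mp hzy).symm.trans hyx) ▸ hz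
  · intro hx
    obtain ⟨y, hy⟩ := Option.isSome_iff_exists.mp (ha x hx)
    exact ⟨y, ⟨x, hx, hy⟩, (h x y).mp hy⟩

end Renaming

theorem Renaming.ofNameFun_isTotal {f : ℕ → Option ℕ} (hf : ∀ n, (f n).isSome)
    (hinj : ∀ ⦃x y z : ℕ⦄, f x = some z → f y = some z → x = y) :
    (Renaming.ofNameFun f hinj).IsTotal := by
  rintro (n | n) <;> simpa [Renaming.ofNameFun] using hf n

theorem Renaming.ofNameFun_isInverse {f g : ℕ → Option ℕ}
    (hfg : ∀ m n, f m = some n ↔ g n = some m)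
    (hf : ∀ ⦃x y z : ℕ⦄, f x = some z → f y = some z → x = y)
    (hg : ∀ ⦃x y z : ℕ⦄, g x = some z → g y = some z → x = y) :
    (Renaming.ofNameFun f hf).IsInverse (Renaming.ofNameFun g hg) := by
  rintro (m | m) (n | n) <;> simp [Renaming.ofNameFun, hfg]

theorem lRen_isTotal : lRen.IsTotal := Renaming.ofNameFun_isTotal (fun _ => rfl) _

theorem rRen_isTotal : rRen.IsTotal := Renaming.ofNameFun_isTotal (fun _ => rfl) _

theorem lRen_isInverse_lInv : lRen.IsInverse lInv :=
  Renaming.ofNameFun_isInverse (fun m n => by split_ifs <;> simp <;> omega) _ _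

theorem rRen_isInverse_rInv : rRen.IsInverse rInv :=
  Renaming.ofNameFun_isInverse (fun m n => by split_ifs <;> simp <;> omega) _ _

theorem range_lRen_subset : lRen.range ⊆ LabL := by
  rintro _ ⟨n | n, h⟩ <;> cases h <;> simp [LabL, Label.name]

theorem range_rRen_subset : rRen.range ⊆ LabR := by
  rintro _ ⟨n | n, h⟩ <;> cases h <;> simp [LabR, Label.name]

theorem disjoint_LabL_LabR : Disjoint LabL LabR :=
  Set.disjoint_left.mpr fun x (hl : x.name % 2 = 0) (hr : x.name % 2 = 1) => by omega

theorem disjoint_range_lRen_rRen : Disjoint lRen.range rRen.range :=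
  disjoint_LabL_LabR.mono range_lRen_subset range_rRen_subset

theorem step_rename_iff {P Q : Proc} {f : Renaming} {c : Act} :
    Step (P.rename f) c Q ↔
      ∃ a P', Step P a P' ∧ (∀ l ∈ a, (f.toFun l).isSome) ∧ c = f.onAction a ∧
        Q = P'.rename f := by
  constructor
  · rintro (_ | _ | _ | @⟨_, a, P', _, h, hsome⟩)
    exact ⟨a, P', h, hsome, rfl, rfl⟩
  · rintro ⟨a, P', h, hsome, rfl, rfl⟩
    exact h.rename hsome

theorem Renaming.IsTotal.step_rename_iff {P Q : Proc} {f : Renaming} {c : Act}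
    (hf : f.IsTotal) :
    Step (P.rename f) c Q ↔ ∃ a P', Step P a P' ∧ c = f.onAction a ∧ Q = P'.rename f := by
  have hf' : ∀ l, (f.toFun l).isSome := hf
  simp only [_root_.step_rename_iff, hf', implies_true, true_and]

theorem step_restrict_iff {P Q : Proc} {L : Set Label} {a : Act} :
    Step (P.restrict L) a Q ↔
      (∀ l ∈ a, l ∉ L ∧ l.bar ∉ L) ∧ ∃ P', Step P a P' ∧ Q = P'.restrict L := by
  constructor
  · rintro (_ | _ | @⟨_, _, P', _, h, hL⟩)
    exact ⟨hL, P', h, rfl⟩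
  · rintro ⟨hL, P', h, rfl⟩
    exact h.restrict hL

theorem exists_eq_par_of_step_par {P Q Z : Proc} {a : Act} (h : Step (.par P Q) a Z) :
    ∃ P' Q', Z = .par P' Q' := by
  cases h <;> exact ⟨_, _, rfl⟩

theorem Step.par_comm {P Q P' Q' : Proc} {a : Act} (h : Step (.par P Q) a (.par P' Q')) :
    Step (.par Q P) a (.par Q' P') := by
  rcases h with _ | _ | _ | _ | _ | hP | hQ | @⟨_, _, _, _, a, b, c, hP, hQ, hab, hbc, hac⟩
  · exact hP.parR
  · exact hQ.parL
  · rw [Finset.union_comm] at hQ ⊢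
    exact .sync (b := b.image Label.bar) hQ (by rwa [Label.image_bar_image_bar, Finset.union_comm])
      hbc.symm (by rw [Label.image_bar_image_bar]; exact hab.symm) hac.symm

theorem obsSeq_nil_iff {P Q : Proc} : ObsSeq P [] Q ↔ TauStar P Q :=
  ⟨fun | .nil h => h, .nil⟩

theorem obsSeq_cons_iff {P Q : Proc} {a : Act} {s : List Act} :
    ObsSeq P (a :: s) Q ↔ ∃ R, Obs P a R ∧ ObsSeq R s Q :=
  ⟨fun | .cons h₁ h₂ => ⟨_, h₁, h₂⟩, fun ⟨_, h₁, h₂⟩ => .cons h₁ h₂⟩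

def CommutesWithSteps (F : Proc → Proc) : Prop :=
  ∀ P c Q, Step (F P) c Q ↔ ∃ P', Step P c P' ∧ Q = F P'

namespace CommutesWithSteps

variable {F : Proc → Proc} {P Q : Proc} {a : Act}

theorem tauStar_iff (hF : CommutesWithSteps F) :
    TauStar (F P) Q ↔ ∃ P', TauStar P P' ∧ Q = F P' := by
  constructor
  · intro h
    induction h with
    | refl => exact ⟨P, .refl, rfl⟩
    | tail _ hs ih =>
      obtain ⟨P₁, h₁, rfl⟩ := ih
      obtain ⟨P₂, h₂, rfl⟩ := (hF _ _ _).mp hs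
      exact ⟨P₂, h₁.tail h₂, rfl⟩
  · rintro ⟨P', h, rfl⟩
    induction h with
    | refl => exact .refl
    | tail _ hs ih => exact ih.tail ((hF _ _ _).mpr ⟨_, hs, rfl⟩)

theorem obs_iff (hF : CommutesWithSteps F) : Obs (F P) a Q ↔ ∃ P', Obs P a P' ∧ Q = F P' := by
  constructor
  · rintro ⟨_, _, hF₁, hF₂, hF₃⟩
    obtain ⟨P₁, h₁, rfl⟩ := hF.tauStar_iff.mp hF₁
    obtain ⟨P₂, h₂, rfl⟩ := (hF _ _ _).mp hF₂
    obtain ⟨P₃, h₃, rfl⟩ := hF.tauStar_iff.mp hF₃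
    exact ⟨P₃, ⟨P₁, P₂, h₁, h₂, h₃⟩, rfl⟩
  · rintro ⟨P', ⟨P₁, P₂, h₁, h₂, h₃⟩, rfl⟩
    exact ⟨F P₁, F P₂, hF.tauStar_iff.mpr ⟨P₁, h₁, rfl⟩, (hF _ _ _).mpr ⟨P₂, h₂, rfl⟩,
      hF.tauStar_iff.mpr ⟨P', h₃, rfl⟩⟩

theorem exists_obs_iff (hF : CommutesWithSteps F) : (∃ R, Obs (F P) a R) ↔ ∃ R, Obs P a R := by
  simp only [hF.obs_iff, exists_eq_right, exists_comm (α := Proc)]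

theorem obsSeq_iff (hF : CommutesWithSteps F) {s : List Act} :
    ObsSeq (F P) s Q ↔ ∃ P', ObsSeq P s P' ∧ Q = F P' := by
  induction s generalizing P with
  | nil => simp only [obsSeq_nil_iff, hF.tauStar_iff]
  | cons a s ih =>
    simp only [obsSeq_cons_iff]
    constructor
    · rintro ⟨_, hobs, hs⟩
      obtain ⟨P₁, h₁, rfl⟩ := hF.obs_iff.mp hobs
      obtain ⟨P', h₂, rfl⟩ := ih.mp hs
      exact ⟨P', ⟨P₁, h₁, h₂⟩, rfl⟩
    · rintro ⟨P', ⟨P₁, h₁, h₂⟩, rfl⟩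
      exact ⟨F P₁, hF.obs_iff.mpr ⟨P₁, h₁, rfl⟩, ih.mpr ⟨P', h₂, rfl⟩⟩

theorem failEq (hF : CommutesWithSteps F) (P : Proc) : FailEq (F P) P := by
  ext ⟨s, X⟩
  refine and_congr_right' (and_congr_right' ⟨?_, ?_⟩)
  · rintro ⟨_, hFs, href⟩
    obtain ⟨P', hs, rfl⟩ := hF.obsSeq_iff.mp hFs
    exact ⟨P', hs, fun a ha => hF.exists_obs_iff.not.mp (href a ha)⟩
  · rintro ⟨Q, hs, href⟩
    exact ⟨F Q, hF.obsSeq_iff.mpr ⟨Q, hs, rfl⟩, fun a ha => hF.exists_obs_iff.not.mpr (href a ha)⟩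

end CommutesWithSteps

def IsWire (f g : Renaming) (W : Proc) : Prop :=
  ∀ a Q, Step W a Q ↔
    ∃ e : Act, e.Nonempty ∧ a = f.onAction e ∪ g.onAction (e.image Label.bar) ∧ Q = W

theorem IsWire.symm {f g : Renaming} {W : Proc} (hW : IsWire f g W) : IsWire g f W := by
  intro a Q
  rw [hW]
  constructor <;> rintro ⟨e, he, rfl, rfl⟩ <;>
    exact ⟨e.image Label.bar, he.image _, by rw [Label.image_bar_image_bar, Finset.union_comm], rfl⟩

theorem isWire_Iproc : IsWire lRen rRen Iproc := by
  intro a Q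
  constructor
  · rintro (_ | _ | _ | _ | h)
    simp only [Proc.subst, reduceIte] at h
    obtain _ | ⟨j, hj⟩ := h
    obtain ⟨e, hdec, he⟩ := hj
    refine ⟨e, he, ?_, rfl⟩
    simp only [hdec, Renaming.onAction_image_bar]
  · rintro ⟨e, he, rfl, rfl⟩
    unfold Iproc
    refine .fix ?_
    simp only [Proc.subst, reduceIte]
    have hmem : Encodable.encode e ∈
        {n | ∃ a : Act, (Encodable.decode n : Option Act) = some a ∧ a.Nonempty} :=
      ⟨e, Encodable.encodek e, he⟩
    convert Step.sum _ hmem using 2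
    simp only [Encodable.encodek, Renaming.onAction_image_bar]

section Wire

open Renaming

variable {f g : Renaming} {W P Z : Proc} {c : Act}

theorem IsWire.exists_of_step_par_rename_left (hW : IsWire f g W) (hf : f.IsTotal)
    (hg : g.IsTotal) (hfg : Disjoint f.range g.range)
    (h : Step (.par (P.rename f) W) (g.onAction c) Z) :
    ∃ P', Step P c P' ∧ Z = .par (P'.rename f) W := by
  -- Alone, `P[f]` can only move silently and `W` cannot move at all (its `f`-part is nonempty);
  -- in a synchronization `P[f]` must hand its whole action to `W`.
  generalize hc : g.onAction c = a at h
  rcases h with _ | _ | _ | _ | _ | hP | hW' | @⟨_, _, P₁, W', a₁, b, c₂, hP, hW', -, -, -⟩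
  · obtain ⟨d, P', hd, rfl, rfl⟩ := hf.step_rename_iff.mp hP
    have hd₀ : f.onAction d = ∅ := Finset.eq_empty_of_coe_subset_of_disjoint hfg
      coe_onAction_subset_range (hc ▸ coe_onAction_subset_range)
    rw [hd₀, hg.onAction_eq_empty_iff] at hc
    rw [hf.onAction_eq_empty_iff] at hd₀
    exact ⟨P', hc ▸ hd₀ ▸ hd, rfl⟩
  · obtain ⟨e, he, rfl, rfl⟩ := (hW _ _).mp hW'
    have he₀ : f.onAction e = ∅ := Finset.eq_empty_of_coe_subset_of_disjoint hfg
      coe_onAction_subset_range ((hc ▸ coe_onAction_subset_range).trans' (by simp))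
    exact absurd ((hf.onAction_eq_empty_iff.mp he₀) ▸ he) Finset.not_nonempty_empty
  · obtain ⟨d, P', hd, hdab, rfl⟩ := hf.step_rename_iff.mp hP
    obtain ⟨e, -, he, rfl⟩ := (hW _ _).mp hW'
    obtain rfl : a₁ = ∅ := Finset.eq_empty_of_coe_subset_of_disjoint hfg
      ((hdab ▸ coe_onAction_subset_range).trans' (by simp))
      ((hc ▸ coe_onAction_subset_range).trans' (by simp))
    rw [Finset.empty_union] at hdab hc
    subst hdab hc
    rw [← onAction_image_bar] at he
    obtain ⟨hde, hce⟩ := Disjoint.eq_and_eq_of_sup_eq_sup he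
      (disjoint_onAction hfg) (disjoint_onAction hfg)
    obtain rfl := hf.onAction_injective hde
    obtain rfl := hg.onAction_injective hce
    exact ⟨P', by rwa [Label.image_bar_image_bar], rfl⟩

theorem IsWire.step_par_rename_left (hW : IsWire f g W) (hf : f.IsTotal)
    (hfg : Disjoint f.range g.range) {P' : Proc} (h : Step P c P') :
    Step (.par (P.rename f) W) (g.onAction c) (.par (P'.rename f) W) := by
  rcases c.eq_empty_or_nonempty with rfl | hc
  · exact (h.rename fun l _ => hf l).parL
  · have hW' : Step W ((f.onAction c).image Label.bar ∪ g.onAction c) W := by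
      rw [← onAction_image_bar]
      simpa using (hW _ _).mpr ⟨c.image Label.bar, hc.image _, rfl, rfl⟩
    have hP : Step (P.rename f) (∅ ∪ f.onAction c) (P'.rename f) := by
      rw [Finset.empty_union]
      exact h.rename fun l _ => hf l
    simpa using Step.sync hP hW' (by simp)
      (by rw [← onAction_image_bar]; exact disjoint_onAction hfg) (by simp)

theorem IsWire.step_par_rename_left_iff (hW : IsWire f g W) (hf : f.IsTotal) (hg : g.IsTotal)
    (hfg : Disjoint f.range g.range) :
    Step (.par (P.rename f) W) (g.onAction c) Z ↔ ∃ P', Step P c P' ∧ Z = .par (P'.rename f) W :=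
  ⟨hW.exists_of_step_par_rename_left hf hg hfg, fun ⟨_, h, hZ⟩ =>
    hZ ▸ hW.step_par_rename_left hf hfg h⟩

theorem IsWire.step_par_rename_right_iff (hW : IsWire f g W) (hf : f.IsTotal) (hg : g.IsTotal)
    (hfg : Disjoint f.range g.range) :
    Step (.par W (P.rename f)) (g.onAction c) Z ↔ ∃ P', Step P c P' ∧ Z = .par W (P'.rename f) := by
  constructor
  · intro h
    obtain ⟨W', P₁, rfl⟩ := exists_eq_par_of_step_par h
    obtain ⟨P', h', hZ⟩ := hW.exists_of_step_par_rename_left hf hg hfg h.par_comm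
    cases hZ
    exact ⟨P', h', rfl⟩
  · rintro ⟨P', h, rfl⟩
    exact (hW.step_par_rename_left hf hfg h).par_comm

end Wire

theorem step_rename_restrict_iff {g h : Renaming} {L : Set Label} {X Q : Proc} {c : Act}
    (hgh : g.IsInverse h) (hg : g.IsTotal) (hL : Disjoint g.range L) :
    Step ((X.restrict L).rename h) c Q ↔
      ∃ Z, Step X (g.onAction c) Z ∧ Q = (Z.restrict L).rename h := by
  constructor
  · intro hs
    obtain ⟨a, Y, hY, hsome, rfl, rfl⟩ := step_rename_iff.mp hs
    obtain ⟨-, Z, hZ, rfl⟩ := step_restrict_iff.mp hY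
    have hga : g.onAction (h.onAction a) = a := hgh.symm.onAction_onAction hsome
    exact ⟨Z, by rwa [hga], rfl⟩
  · rintro ⟨Z, hZ, rfl⟩
    have hrange : ∀ l ∈ g.onAction c, l ∈ g.range := fun _ hl =>
      Renaming.coe_onAction_subset_range hl
    have hs := (hZ.restrict fun l hl =>
        ⟨hL.notMem_of_mem_left (hrange l hl),
          hL.notMem_of_mem_left (Renaming.bar_mem_range (hrange l hl))⟩).rename
      (f := h) fun l hl => hgh.isSome_iff.mpr (hrange l hl)
    rwa [hgh.onAction_onAction fun l _ => hg l] at hs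

theorem IsWire.commutesWithSteps_lapp {W : Proc} (hW : IsWire lRen rRen W) :
    CommutesWithSteps (lapp · W) := by
  intro P c Q
  dsimp only [lapp]
  rw [step_rename_restrict_iff rRen_isInverse_rInv rRen_isTotal
    (disjoint_LabL_LabR.mono_right range_rRen_subset).symm]
  simp [hW.step_par_rename_left_iff lRen_isTotal rRen_isTotal disjoint_range_lRen_rRen]

theorem IsWire.commutesWithSteps_rapp {W : Proc} (hW : IsWire lRen rRen W) :
    CommutesWithSteps (rapp W ·) := by
  intro P c Q
  dsimp only [rapp]
  rw [step_rename_restrict_iff lRen_isInverse_lInv lRen_isTotal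
    (disjoint_LabL_LabR.mono_left range_lRen_subset)]
  simp [hW.symm.step_par_rename_right_iff rRen_isTotal lRen_isTotal
    disjoint_range_lRen_rRen.symm]

/-- **The identity (wire) process is a two-sided unit for both applications**:
`⟨P | I⟩ ≈_f P ≈_f (I | P⟩` for every process `P`. -/
theorem wire_unit_for_applications (P : Proc) :
    FailEq (lapp P Iproc) P ∧ FailEq (rapp Iproc P) P :=
  ⟨isWire_Iproc.commutesWithSteps_lapp.failEq P, isWire_Iproc.commutesWithSteps_rapp.failEq P⟩
end
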